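/- arXiv:2202.09060 — 2 statements merged into one kernel-verified Lean document; each statement's English description precedes it below -/
import Mathlib

section
/- Let a, b, c ∈ ℝ with a ≠ 0 and h > 0, and let Φ = a·I_N + c·W, Ψ = b·Δ, Φ_s = e^{ah}·I_N + (c/a)(e^{ah} − 1)·W, Ψ_s = (b/a)(e^{ah} − 1)·Δ. Assume Φ_s is invertible (equivalently, 0 is not an eigenvalue of Φ_s). Then the sampled-data pair (Φ_s, Ψ_s) is controllable if and only if the continuous-time pair (Φ, Ψ) satisfies the PBH condition. -/
open Matrix
open scoped Kronecker

/-- Entrywise complexification of a real matrix. -/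
noncomputable def cpx {a b : Type*} (M : Matrix a b ℝ) : Matrix a b ℂ :=
  M.map (Complex.ofReal)

/-- The matrix exponential `e^{M}`. -/
noncomputable def mexp {q : Type*} [Fintype q] [DecidableEq q]
    (M : Matrix q q ℝ) : Matrix q q ℝ :=
  NormedSpace.exp M

/-- The entrywise integral `∫₀ʰ e^{Aτ} dτ`. -/
noncomputable def intExp {q : Type*} [Fintype q] [DecidableEq q]
    (A : Matrix q q ℝ) (h : ℝ) : Matrix q q ℝ :=
  Matrix.of fun i j => ∫ τ in (0:ℝ)..h, (NormedSpace.exp (τ • A)) i j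

/-- `θ` is an eigenvalue of the complex square matrix `M`. -/
def IsEig {q : Type*} [Fintype q] [DecidableEq q] (M : Matrix q q ℂ) (θ : ℂ) : Prop :=
  (θ • (1 : Matrix q q ℂ) - M).det = 0

/-- PBH condition for a pair of complex matrices: for every `s ∈ ℂ`, the only row
vector `v` with `v (sI - M) = 0` and `v G = 0` is `v = 0`. -/
def PBH {q r : Type*} [Fintype q] [DecidableEq q] [Fintype r]
    (M : Matrix q q ℂ) (G : Matrix q r ℂ) : Prop :=
  ∀ (s : ℂ) (v : q → ℂ), v ᵥ* (s • (1 : Matrix q q ℂ) - M) = 0 → v ᵥ* G = 0 → v = 0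

/-- Controllability of a discrete-time linear system `x⁺ = F x + G u`:
every state can be steered to the origin in finitely many steps. -/
def Controllable {q r : Type*} [Fintype q] [DecidableEq q] [Fintype r]
    (F : Matrix q q ℝ) (G : Matrix q r ℝ) : Prop :=
  ∀ x : q → ℝ, ∃ (k : ℕ) (u : Fin k → r → ℝ),
    (F ^ k) *ᵥ x + ∑ j : Fin k, (F ^ (k - 1 - (j : ℕ))) *ᵥ (G *ᵥ u j) = 0

/-- `𝓑(h) = (∫₀ʰ e^{Aτ} dτ)·B`. -/
noncomputable def sampB {n p : ℕ} (A : Matrix (Fin n) (Fin n) ℝ)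
    (B : Matrix (Fin n) (Fin p) ℝ) (h : ℝ) : Matrix (Fin n) (Fin p) ℝ :=
  intExp A h * B

/-- `𝓗(h) = (∫₀ʰ e^{Aτ} dτ)·H·C`. -/
noncomputable def sampH {n m : ℕ} (A : Matrix (Fin n) (Fin n) ℝ)
    (H : Matrix (Fin n) (Fin m) ℝ) (C : Matrix (Fin m) (Fin n) ℝ) (h : ℝ) :
    Matrix (Fin n) (Fin n) ℝ :=
  intExp A h * H * C

/-- `Φ_s = I_N ⊗ e^{Ah} + W ⊗ 𝓗(h)`. -/
noncomputable def Phis {n m N : ℕ} (A : Matrix (Fin n) (Fin n) ℝ)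
    (H : Matrix (Fin n) (Fin m) ℝ) (C : Matrix (Fin m) (Fin n) ℝ)
    (W : Matrix (Fin N) (Fin N) ℝ) (h : ℝ) :
    Matrix (Fin N × Fin n) (Fin N × Fin n) ℝ :=
  (1 : Matrix (Fin N) (Fin N) ℝ) ⊗ₖ mexp (h • A) + W ⊗ₖ sampH A H C h

/-- `E_λ = e^{Ah} + λ·𝓗(h)` (complexified). -/
noncomputable def Emat {n m : ℕ} (A : Matrix (Fin n) (Fin n) ℝ)
    (H : Matrix (Fin n) (Fin m) ℝ) (C : Matrix (Fin m) (Fin n) ℝ)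
    (h : ℝ) (lam : ℂ) : Matrix (Fin n) (Fin n) ℂ :=
  cpx (mexp (h • A)) + lam • cpx (sampH A H C h)

/-!
With `μ = (e^{ah} - 1) / a`, which is nonzero because `ah ≠ 0`, one has `Φ_s = I + μ Φ` and
`Ψ_s = μ Ψ`, and the substitution `s ↦ 1 + μ s` of the spectral variable shows that the PBH
condition is the same for `(Φ, Ψ)` and `(I + μ Φ, μ Ψ)`. It remains to see that a real pair
`(F, G)` with `F` invertible is controllable iff its complexification satisfies PBH. Both are
equivalent to the triviality of the space of row vectors `v` with `v F^i G = 0` for all `i`: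
* this space is invariant under `v ↦ v F`, so over `ℂ` it is nonzero iff it contains a left
  eigenvector of `F` killing `G`, i.e. iff PBH fails;
* if it is trivial, Cayley–Hamilton makes the Kalman matrix `[F^{N-1} G, …, G]` of full row
  rank, so every `F^N x` can be cancelled in `N` steps;
* conversely, `v ↦ v F^k` is injective on the space, hence onto, so any `v` in it is `w F^k` and
  `v · x = w · F^k x = 0` for every `x` steered to `0` in `k` steps.
-/

open Polynomial

namespace Matrix

variable {K : Type*} [Field K] {n m : Type*} [Fintype n]

theorem mulVec_surjective_of_vecMul_injective [Fintype m] {M : Matrix n m K}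
    (hM : Function.Injective M.vecMul) : Function.Surjective M.mulVec := by
  have hrank : M.rank = Fintype.card n := (vecMul_injective_iff.1 hM).rank_matrix
  rw [← coe_mulVecLin, ← LinearMap.range_eq_top]
  exact Submodule.eq_top_of_finrank_eq (by rw [← rank, hrank, Module.finrank_fintype_fun_eq_card])

variable [DecidableEq n]

def kalmanAnnihilator (F : Matrix n n K) (G : Matrix n m K) : Submodule K (n → K) where
  carrier := {v | ∀ i : ℕ, v ᵥ* (F ^ i * G) = 0}
  add_mem' hv hw i := by rw [add_vecMul, hv i, hw i, add_zero]
  zero_mem' i := zero_vecMul _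
  smul_mem' c v hv i := by rw [smul_vecMul, hv i, smul_zero]

variable {F : Matrix n n K} {G : Matrix n m K} {v : n → K}

theorem mem_kalmanAnnihilator :
    v ∈ kalmanAnnihilator F G ↔ ∀ i : ℕ, v ᵥ* (F ^ i * G) = 0 :=
  Iff.rfl

theorem vecMul_pow_mem_kalmanAnnihilator (hv : v ∈ kalmanAnnihilator F G) (k : ℕ) :
    v ᵥ* F ^ k ∈ kalmanAnnihilator F G := fun i => by
  rw [vecMul_vecMul, ← Matrix.mul_assoc, ← pow_add]
  exact hv (k + i)

theorem exists_vecMul_pow_eq_of_isUnit (hF : IsUnit F) (hv : v ∈ kalmanAnnihilator F G)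
    (k : ℕ) : ∃ w ∈ kalmanAnnihilator F G, w ᵥ* F ^ k = v := by
  let T := (vecMulLinear (F ^ k)).restrict fun w (hw : w ∈ kalmanAnnihilator F G) =>
    vecMul_pow_mem_kalmanAnnihilator hw k
  have hT : Function.Injective T := fun w₁ w₂ h =>
    Subtype.ext (vecMul_injective_of_isUnit (hF.pow k) (congrArg Subtype.val h))
  obtain ⟨w, hw⟩ := LinearMap.injective_iff_surjective.1 hT ⟨v, hv⟩
  exact ⟨w, w.2, congrArg Subtype.val hw⟩

theorem mem_kalmanAnnihilator_of_lt_card (hv : ∀ i < Fintype.card n, v ᵥ* (F ^ i * G) = 0) :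
    v ∈ kalmanAnnihilator F G := by
  rcases isEmpty_or_nonempty n with _ | _
  · exact Subsingleton.elim (0 : n → K) v ▸ zero_mem _
  have hχ : F.charpoly ≠ 1 := fun h1 => by
    simpa [h1] using (F.charpoly_natDegree_eq_dim).trans_gt Fintype.card_pos
  intro i
  have hdeg : (X ^ i %ₘ F.charpoly).natDegree < Fintype.card n :=
    F.charpoly_natDegree_eq_dim ▸ natDegree_modByMonic_lt _ F.charpoly_monic hχ
  rw [F.pow_eq_aeval_mod_charpoly, aeval_eq_sum_range' hdeg, Matrix.sum_mul, vecMul_sum]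
  refine Finset.sum_eq_zero fun j hj => ?_
  rw [Matrix.smul_mul, vecMul_smul, hv j (Finset.mem_range.1 hj), smul_zero]

end Matrix

open Matrix

section
variable {n m : Type*} [Fintype n] [DecidableEq n] [Fintype m] {F : Matrix n n ℝ}
  {G : Matrix n m ℝ}

theorem Controllable.eq_zero_of_mem_kalmanAnnihilator (hc : Controllable F G) (hF : IsUnit F)
    {v : n → ℝ} (hv : v ∈ kalmanAnnihilator F G) : v = 0 := by
  refine dotProduct_eq_zero_iff.1 fun x => ?_
  obtain ⟨k, u, hu⟩ := hc x
  obtain ⟨w, hw, rfl⟩ := exists_vecMul_pow_eq_of_isUnit hF hv k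
  rw [← dotProduct_mulVec, eq_neg_of_add_eq_zero_left hu, dotProduct_neg, dotProduct_sum,
    neg_eq_zero]
  refine Finset.sum_eq_zero fun j _ => ?_
  rw [mulVec_mulVec, dotProduct_mulVec, hw, zero_dotProduct]

theorem controllable_of_kalmanAnnihilator_eq_bot (hS : kalmanAnnihilator F G = ⊥) :
    Controllable F G := by
  intro x
  set k := Fintype.card n
  let C : Matrix n (Fin k × m) ℝ := of fun i p => (F ^ (k - 1 - p.1) * G) i p.2
  have hC : Function.Injective C.vecMul := by
    rw [← coe_vecMulLinear, ← LinearMap.ker_eq_bot, eq_bot_iff, ← hS]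
    intro v hv
    refine mem_kalmanAnnihilator_of_lt_card fun i hi => funext fun t => ?_
    have hvi := congrFun hv (⟨k - 1 - i, by omega⟩, t)
    simpa [C, vecMul, dotProduct, show k - 1 - (k - 1 - i) = i by omega] using hvi
  obtain ⟨u, hu⟩ := mulVec_surjective_of_vecMul_injective hC (-(F ^ k *ᵥ x))
  refine ⟨k, fun j t => u (j, t), ?_⟩
  have hCu : C *ᵥ u = ∑ j : Fin k, F ^ (k - 1 - (j : ℕ)) *ᵥ (G *ᵥ fun t => u (j, t)) := by
    ext i
    simp [C, mulVec, dotProduct, Fintype.sum_prod_type, Finset.sum_apply]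
  rw [← hCu, hu, add_neg_cancel]

end

section Complexification
variable {n m o : Type*}

theorem cpx_mul [Fintype m] (A : Matrix n m ℝ) (B : Matrix m o ℝ) :
    cpx (A * B) = cpx A * cpx B := by
  ext i j
  simp [cpx, mul_apply]

theorem cpx_one [DecidableEq n] : cpx (1 : Matrix n n ℝ) = 1 := by
  ext i j
  by_cases hij : i = j <;> simp [cpx, one_apply, hij]

theorem cpx_pow [Fintype n] [DecidableEq n] (A : Matrix n n ℝ) (k : ℕ) :
    cpx (A ^ k) = cpx A ^ k := by
  induction k with
  | zero => exact cpx_one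
  | succ k ih => rw [pow_succ, pow_succ, cpx_mul, ih]

theorem cpx_add (A B : Matrix n m ℝ) : cpx (A + B) = cpx A + cpx B := by
  ext i j
  simp [cpx]

theorem cpx_smul (r : ℝ) (A : Matrix n m ℝ) : cpx (r • A) = (r : ℂ) • cpx A := by
  ext i j
  simp [cpx]

variable [Fintype n]

theorem ofReal_vecMul_cpx (v : n → ℝ) (M : Matrix n m ℝ) :
    (fun i => (v i : ℂ)) ᵥ* cpx M = fun j => ((v ᵥ* M) j : ℂ) := by
  ext j
  simp [vecMul, dotProduct, cpx]

theorem re_vecMul_cpx (v : n → ℂ) (M : Matrix n m ℝ) (j : m) :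
    ((v ᵥ* cpx M) j).re = ((fun i => (v i).re) ᵥ* M) j := by
  simp [vecMul, dotProduct, cpx, Complex.re_sum]

theorem im_vecMul_cpx (v : n → ℂ) (M : Matrix n m ℝ) (j : m) :
    ((v ᵥ* cpx M) j).im = ((fun i => (v i).im) ᵥ* M) j := by
  simp [vecMul, dotProduct, cpx, Complex.im_sum]

variable [DecidableEq n] {F : Matrix n n ℝ} {G : Matrix n m ℝ}

theorem kalmanAnnihilator_cpx_eq_bot_iff :
    kalmanAnnihilator (cpx F) (cpx G) = ⊥ ↔ kalmanAnnihilator F G = ⊥ := by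
  simp only [Submodule.eq_bot_iff, mem_kalmanAnnihilator, ← cpx_pow, ← cpx_mul]
  constructor
  · intro h v hv
    have h0 := h _ fun i => by rw [ofReal_vecMul_cpx, hv i]; rfl
    exact funext fun i => Complex.ofReal_eq_zero.1 (congrFun h0 i)
  · intro h v hv
    have hre := h _ fun i => funext fun j => by rw [← re_vecMul_cpx, hv i]; rfl
    have him := h _ fun i => funext fun j => by rw [← im_vecMul_cpx, hv i]; rfl
    exact funext fun i => Complex.ext (congrFun hre i) (congrFun him i)

end Complexification

section PBH
variable {n m : Type*} [Fintype n] [DecidableEq n] [Fintype m]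

theorem pbh_iff_kalmanAnnihilator_eq_bot {M : Matrix n n ℂ} {G : Matrix n m ℂ} :
    PBH M G ↔ kalmanAnnihilator M G = ⊥ := by
  have vecMul_sub_eq_zero_iff : ∀ (s : ℂ) (v : n → ℂ),
      v ᵥ* (s • (1 : Matrix n n ℂ) - M) = 0 ↔ v ᵥ* M = s • v := fun s v => by
    rw [vecMul_sub, vecMul_smul, vecMul_one, sub_eq_zero, eq_comm]
  constructor
  · intro hM
    by_contra hS
    have : Nontrivial (kalmanAnnihilator M G) := Submodule.nontrivial_iff_ne_bot.2 hS
    obtain ⟨s, hs⟩ := Module.End.exists_eigenvalue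
      ((vecMulLinear M).restrict fun w (hw : w ∈ kalmanAnnihilator M G) => by
        simpa using vecMul_pow_mem_kalmanAnnihilator hw 1)
    obtain ⟨w, hw⟩ := hs.exists_hasEigenvector
    refine hw.2 (Subtype.ext (hM s w ?_ (by simpa using w.2 0)))
    exact (vecMul_sub_eq_zero_iff s w).2 (congrArg Subtype.val hw.apply_eq_smul)
  · intro hS s v hsv hvG
    rw [vecMul_sub_eq_zero_iff] at hsv
    rw [← Submodule.mem_bot ℂ, ← hS]
    intro i
    induction i with
    | zero => simpa using hvG
    | succ k ih =>
      rw [pow_succ', Matrix.mul_assoc, ← vecMul_vecMul, hsv, smul_vecMul, ih, smul_zero]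

theorem pbh_one_add_smul_iff {P : Matrix n n ℂ} {Q : Matrix n m ℂ} {μ : ℂ} (hμ : μ ≠ 0) :
    PBH (1 + μ • P) (μ • Q) ↔ PBH P Q := by
  have shift : ∀ s : ℂ, (1 + μ * s) • (1 : Matrix n n ℂ) - (1 + μ • P) =
      μ • (s • (1 : Matrix n n ℂ) - P) := fun s => by
    match_scalars <;> ring
  constructor
  · intro h s v hsv hvQ
    refine h (1 + μ * s) v ?_ ?_
    · rw [shift, vecMul_smul, hsv, smul_zero]
    · rw [vecMul_smul, hvQ, smul_zero]
  · intro h s v hsv hvQ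
    have hs : s = 1 + μ * ((s - 1) / μ) := by field_simp; ring
    rw [hs, shift, vecMul_smul] at hsv
    rw [vecMul_smul] at hvQ
    exact h _ v ((smul_eq_zero.1 hsv).resolve_left hμ) ((smul_eq_zero.1 hvQ).resolve_left hμ)

end PBH

theorem controllable_iff_pbh_cpx {n m : Type*} [Fintype n] [DecidableEq n] [Fintype m]
    {F : Matrix n n ℝ} {G : Matrix n m ℝ} (hF : IsUnit F) :
    Controllable F G ↔ PBH (cpx F) (cpx G) := by
  rw [pbh_iff_kalmanAnnihilator_eq_bot, kalmanAnnihilator_cpx_eq_bot_iff]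
  exact ⟨fun hc => (Submodule.eq_bot_iff _).2 fun _ => hc.eq_zero_of_mem_kalmanAnnihilator hF,
    controllable_of_kalmanAnnihilator_eq_bot⟩

theorem stmt15_general
    (N : ℕ) (h a b c : ℝ) (hh : 0 < h) (ha : a ≠ 0)
    (W : Matrix (Fin N) (Fin N) ℝ)
    (δ : Fin N → ℝ)
    (hinv : IsUnit (Real.exp (a * h) • (1 : Matrix (Fin N) (Fin N) ℝ) +
      ((c / a) * (Real.exp (a * h) - 1)) • W)) :
    Controllable
      (Real.exp (a * h) • (1 : Matrix (Fin N) (Fin N) ℝ) +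
        ((c / a) * (Real.exp (a * h) - 1)) • W)
      (((b / a) * (Real.exp (a * h) - 1)) • Matrix.diagonal δ) ↔
      PBH (cpx (a • (1 : Matrix (Fin N) (Fin N) ℝ) + c • W))
        (cpx (b • Matrix.diagonal δ)) := by
  set μ := (Real.exp (a * h) - 1) / a with hμ_def
  have hμ : μ ≠ 0 :=
    div_ne_zero (sub_ne_zero.2 fun h1 => mul_ne_zero ha hh.ne' (Real.exp_eq_one_iff _ |>.1 h1)) ha
  have hΦ : Real.exp (a * h) • (1 : Matrix (Fin N) (Fin N) ℝ) +
      ((c / a) * (Real.exp (a * h) - 1)) • W = 1 + μ • (a • 1 + c • W) := by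
    rw [hμ_def]
    match_scalars
    · field_simp
      ring
    · field_simp
  have hΨ : ((b / a) * (Real.exp (a * h) - 1)) • Matrix.diagonal δ =
      μ • (b • Matrix.diagonal δ) := by
    rw [smul_smul, hμ_def]
    congr 1
    field_simp
  rw [hΦ] at hinv ⊢
  rw [hΨ, controllable_iff_pbh_cpx hinv, cpx_add, cpx_one, cpx_smul, cpx_smul]
  exact pbh_one_add_smul_iff (Complex.ofReal_ne_zero.2 hμ)

theorem stmt15
    (N : ℕ) (hN : 0 < N) (h a b c : ℝ) (hh : 0 < h) (ha : a ≠ 0)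
    (W : Matrix (Fin N) (Fin N) ℝ)
    (δ : Fin N → ℝ) (hδ : ∀ i, δ i = 0 ∨ δ i = 1)
    (hinv : IsUnit (Real.exp (a * h) • (1 : Matrix (Fin N) (Fin N) ℝ) +
      ((c / a) * (Real.exp (a * h) - 1)) • W)) :
    Controllable
      (Real.exp (a * h) • (1 : Matrix (Fin N) (Fin N) ℝ) +
        ((c / a) * (Real.exp (a * h) - 1)) • W)
      (((b / a) * (Real.exp (a * h) - 1)) • Matrix.diagonal δ) ↔
      PBH (cpx (a • (1 : Matrix (Fin N) (Fin N) ℝ) + c • W))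
        (cpx (b • Matrix.diagonal δ)) :=
  stmt15_general N h a b c hh ha W δ hinv
end

section
/- Consider the networked system with self-loop node dynamics A = I_n: let Φ = I_{Nn} + W ⊗ (H·C), Ψ = Δ ⊗ B, and the sampled-data system Φ_s = e^{h}·I_{Nn} + (e^{h} − 1)·W ⊗ (H·C), Ψ_s = (e^{h} − 1)·Δ ⊗ B, where h > 0. If the continuous-time pair (Φ, Ψ) satisfies the PBH condition, then the sampled-data pair (Φ_s, Ψ_s) is controllable. -/
open Matrix
open scoped Kronecker

/-!
Hautus test: if `(F, G)` satisfies the PBH condition, no nonzero row vector `v` has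
`v F^i G = 0` for all `i`, because the space of such `v` is invariant under `v ↦ v F` and so
would contain a left eigenvector of `F` annihilating `G`. By duality the subspaces reachable
from `0` in `k` steps then exhaust the state space, and being an increasing chain in a
finite-dimensional space, one of them is everything; this is null-controllability.

The sampled pair is an affine reparametrisation of the continuous one:
`Φ_s = I + (e^h - 1) Φ` and `Ψ_s = (e^h - 1) Ψ` with `e^h - 1 ≠ 0`, and the PBH condition is
invariant under such changes (replace `s` by `(s - 1) / (e^h - 1)`).
-/

section Reachability

variable {q r : Type*} [Fintype q] [DecidableEq q] [Fintype r]

noncomputable def reachable (F : Matrix q q ℝ) (G : Matrix q r ℝ) (k : ℕ) :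
    Submodule ℝ (q → ℝ) :=
  LinearMap.range (∑ j : Fin k, (F ^ (k - 1 - (j : ℕ)) * G).mulVecLin.comp (LinearMap.proj j))

variable {F : Matrix q q ℝ} {G : Matrix q r ℝ}

theorem mem_reachable_iff {k : ℕ} {y : q → ℝ} :
    y ∈ reachable F G k ↔
      ∃ u : Fin k → r → ℝ, ∑ j : Fin k, (F ^ (k - 1 - (j : ℕ))) *ᵥ (G *ᵥ u j) = y := by
  simp [reachable, Matrix.mulVec_mulVec]

theorem reachable_mono : Monotone (reachable F G) := by
  refine monotone_nat_of_le_succ fun k y hy => ?_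
  obtain ⟨u, rfl⟩ := mem_reachable_iff.1 hy
  refine mem_reachable_iff.2 ⟨Fin.cons 0 u, ?_⟩
  simp [Fin.sum_univ_succ, Nat.sub_sub, add_comm]

theorem pow_mul_mulVec_mem_reachable (i : ℕ) (v : r → ℝ) :
    (F ^ i * G) *ᵥ v ∈ reachable F G (i + 1) := by
  refine mem_reachable_iff.2 ⟨Fin.cons v 0, ?_⟩
  simp [Fin.sum_univ_succ, Matrix.mulVec_mulVec]

theorem iSup_reachable_eq_top (hFG : ∀ v : q → ℝ, (∀ i : ℕ, v ᵥ* (F ^ i * G) = 0) → v = 0) :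
    ⨆ k, reachable F G k = ⊤ := by
  classical
  rw [← Submodule.dualAnnihilator_eq_bot_iff, Submodule.eq_bot_iff]
  intro φ hφ
  obtain ⟨v, rfl⟩ := (dotProductEquiv ℝ q).surjective φ
  have hv : ∀ i : ℕ, v ᵥ* (F ^ i * G) = 0 := fun i => funext fun j => by
    have := (Submodule.mem_dualAnnihilator _).1 hφ _
      (Submodule.mem_iSup_of_mem (i + 1) (pow_mul_mulVec_mem_reachable i (Pi.single j 1)))
    simpa [Matrix.vecMul, dotProduct] using this
  simp [hFG v hv]

theorem exists_reachable_eq_top (hFG : ∀ v : q → ℝ, (∀ i : ℕ, v ᵥ* (F ^ i * G) = 0) → v = 0) :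
    ∃ k, reachable F G k = ⊤ := by
  obtain ⟨k, hk⟩ :=
    monotone_stabilizes_iff_noetherian.2 inferInstance ⟨reachable F G, reachable_mono⟩
  refine ⟨k, eq_top_iff.2 ((iSup_reachable_eq_top hFG).ge.trans (iSup_le fun m => ?_))⟩
  exact (reachable_mono (le_max_left m k)).trans (hk _ (le_max_right m k)).ge

theorem controllable_of_forall_vecMul_pow_mul
    (hFG : ∀ v : q → ℝ, (∀ i : ℕ, v ᵥ* (F ^ i * G) = 0) → v = 0) : Controllable F G := by
  obtain ⟨k, hk⟩ := exists_reachable_eq_top hFG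
  intro x
  have hx : -((F ^ k) *ᵥ x) ∈ reachable F G k := hk ▸ Submodule.mem_top
  obtain ⟨u, hu⟩ := mem_reachable_iff.1 hx
  exact ⟨k, u, by rw [hu, add_neg_cancel]⟩

end Reachability

section PBH

variable {q r : Type*} [Fintype q] [DecidableEq q] [Fintype r]
  {M : Matrix q q ℂ} {G : Matrix q r ℂ}

theorem PBH.eq_zero_of_forall_vecMul_pow_mul_eq_zero (hMG : PBH M G) {v : q → ℂ}
    (hv : ∀ i : ℕ, v ᵥ* (M ^ i * G) = 0) : v = 0 := by
  let S : Submodule ℂ (q → ℂ) := ⨅ i : ℕ, LinearMap.ker (M ^ i * G).vecMulLinear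
  have mem_S : ∀ x, x ∈ S ↔ ∀ i : ℕ, x ᵥ* (M ^ i * G) = 0 := by
    simp [S, Submodule.mem_iInf]
  have hS : ∀ x ∈ S, M.vecMulLinear x ∈ S := fun x hx => (mem_S _).2 fun i => by
    rw [Matrix.vecMulLinear_apply, Matrix.vecMul_vecMul, ← Matrix.mul_assoc, ← pow_succ']
    exact (mem_S x).1 hx (i + 1)
  by_contra hv0
  have : Nontrivial S := nontrivial_of_ne ⟨v, (mem_S v).2 hv⟩ 0 fun h => hv0 congr($h.1)
  obtain ⟨μ, hμ⟩ := Module.End.exists_eigenvalue (M.vecMulLinear.restrict hS)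
  obtain ⟨w, hw⟩ := hμ.exists_hasEigenvector
  have hwM : (w : q → ℂ) ᵥ* M = μ • (w : q → ℂ) := congr($(hw.apply_eq_smul).1)
  refine hw.2 (Subtype.ext (hMG μ w ?_ (by simpa using (mem_S w).1 w.2 0)))
  rw [Matrix.vecMul_sub, Matrix.vecMul_smul, Matrix.vecMul_one, hwM, sub_self]

theorem PBH.smul_one_add_smul (hMG : PBH M G) (c : ℂ) {a b : ℂ} (ha : a ≠ 0) (hb : b ≠ 0) :
    PBH (c • 1 + a • M) (b • G) := by
  intro s v hs hG
  refine hMG ((s - c) / a) v ?_ ?_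
  · have : s • (1 : Matrix q q ℂ) - (c • 1 + a • M) = a • (((s - c) / a) • 1 - M) := by
      rw [smul_sub, smul_smul, mul_div_cancel₀ _ ha, sub_smul]
      abel
    rw [this, Matrix.vecMul_smul] at hs
    exact (smul_eq_zero.1 hs).resolve_left ha
  · rw [Matrix.vecMul_smul] at hG
    exact (smul_eq_zero.1 hG).resolve_left hb

end PBH

theorem cpx_pow_mul {q r : Type*} [Fintype q] [DecidableEq q] (F : Matrix q q ℝ)
    (G : Matrix q r ℝ) (i : ℕ) : cpx (F ^ i * G) = cpx F ^ i * cpx G :=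
  (Matrix.map_mul (f := Complex.ofRealHom)).trans
    congr($(map_pow Complex.ofRealHom.mapMatrix F i) * cpx G)

theorem cpx_vecMul {q r : Type*} [Fintype q] (v : q → ℝ) (M : Matrix q r ℝ) :
    (fun i => (v i : ℂ)) ᵥ* cpx M = fun j => ((v ᵥ* M) j : ℂ) :=
  funext fun j => (Complex.ofRealHom.map_vecMul M v j).symm

theorem controllable_of_PBH {q r : Type*} [Fintype q] [DecidableEq q] [Fintype r]
    {F : Matrix q q ℝ} {G : Matrix q r ℝ} (hFG : PBH (cpx F) (cpx G)) : Controllable F G := by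
  refine controllable_of_forall_vecMul_pow_mul fun v hv => funext fun j => ?_
  have hvc : ∀ i : ℕ, (fun k => (v k : ℂ)) ᵥ* (cpx F ^ i * cpx G) = 0 := fun i => by
    rw [← cpx_pow_mul, cpx_vecMul, hv]
    exact funext fun _ => Complex.ofReal_zero
  simpa using congrFun (hFG.eq_zero_of_forall_vecMul_pow_mul_eq_zero hvc) j

theorem stmt16_general
    (n m p N : ℕ)
    (h : ℝ) (hh : 0 < h)
    (B : Matrix (Fin n) (Fin p) ℝ) (C : Matrix (Fin m) (Fin n) ℝ)
    (H : Matrix (Fin n) (Fin m) ℝ) (W : Matrix (Fin N) (Fin N) ℝ)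
    (δ : Fin N → ℝ)
    (hPBH : PBH (cpx ((1 : Matrix (Fin N × Fin n) (Fin N × Fin n) ℝ) + W ⊗ₖ (H * C)))
      (cpx (Matrix.diagonal δ ⊗ₖ B))) :
    Controllable
      (Real.exp h • (1 : Matrix (Fin N × Fin n) (Fin N × Fin n) ℝ) +
        (Real.exp h - 1) • (W ⊗ₖ (H * C)))
      ((Real.exp h - 1) • (Matrix.diagonal δ ⊗ₖ B)) := by
  have ha : ((Real.exp h - 1 : ℝ) : ℂ) ≠ 0 :=
    mod_cast (sub_pos.2 (Real.one_lt_exp_iff.2 hh)).ne'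
  apply controllable_of_PBH
  convert hPBH.smul_one_add_smul 1 ha ha using 1
  · ext i j
    simp only [cpx, Matrix.map_apply, Matrix.add_apply, Matrix.smul_apply, Matrix.one_apply,
      smul_eq_mul]
    split_ifs <;>
      simp only [Complex.ofReal_add, Complex.ofReal_mul, Complex.ofReal_sub, Complex.ofReal_one,
        Complex.ofReal_zero] <;> ring
  · ext i j
    simp [cpx]

theorem stmt16
    (n m p N : ℕ) (hn : 0 < n) (hm : 0 < m) (hp : 0 < p) (hN : 0 < N)
    (h : ℝ) (hh : 0 < h)
    (B : Matrix (Fin n) (Fin p) ℝ) (C : Matrix (Fin m) (Fin n) ℝ)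
    (H : Matrix (Fin n) (Fin m) ℝ) (W : Matrix (Fin N) (Fin N) ℝ)
    (δ : Fin N → ℝ) (hδ : ∀ i, δ i = 0 ∨ δ i = 1)
    (hPBH : PBH (cpx ((1 : Matrix (Fin N × Fin n) (Fin N × Fin n) ℝ) + W ⊗ₖ (H * C)))
      (cpx (Matrix.diagonal δ ⊗ₖ B))) :
    Controllable
      (Real.exp h • (1 : Matrix (Fin N × Fin n) (Fin N × Fin n) ℝ) +
        (Real.exp h - 1) • (W ⊗ₖ (H * C)))
      ((Real.exp h - 1) • (Matrix.diagonal δ ⊗ₖ B)) :=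
  stmt16_general n m p N h hh B C H W δ hPBH
end
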